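/- Let G be a multigraph realizing degree sequence d with m_d light double-edges and no other non-simple edges. Then the number of simple ordered two-stars in G is at least M_2 - 8·m_d·d_1. -/

import Mathlib

/-!
A node `i` with `s` simple neighbours and `t` double-edge neighbours has degree `d_i = s + 2t` and
is the centre of exactly `s(s-1)` simple ordered two-stars, so it loses
`d_i(d_i-1) - s(s-1) ≤ 4 t d_i ≤ 4 t d_1` of them. Summing over `i`, the `t`'s add up to the
`2 m_d` ordered double-edges, all of which are light.
-/

open Finset

/-- A multigraph on `n` nodes, given by a symmetric multiplicity function.
`mult i i` is the multiplicity of the loop at `i`. -/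
structure Multigraph (n : ℕ) where
  mult : Fin n → Fin n → ℕ
  symm : ∀ i j, mult i j = mult j i

namespace Multigraph

/-- The degree of a node: a loop counts twice. -/
def deg {n : ℕ} (G : Multigraph n) (i : Fin n) : ℕ :=
  2 * G.mult i i + ∑ j ∈ Finset.univ.filter (fun j => j ≠ i), G.mult i j

/-- `i j` is a simple edge: non-loop of multiplicity exactly 1. -/
def Simple {n : ℕ} (G : Multigraph n) (i j : Fin n) : Prop :=
  i ≠ j ∧ G.mult i j = 1

instance {n : ℕ} (G : Multigraph n) (i j : Fin n) : Decidable (G.Simple i j) :=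
  inferInstanceAs (Decidable (i ≠ j ∧ G.mult i j = 1))

end Multigraph

/-- The (0-indexed) degree sequence extended to all of `ℕ` by zero. -/
def dExt (n : ℕ) (d : Fin n → ℕ) (i : ℕ) : ℕ :=
  if h : i < n then d ⟨i, h⟩ else 0

theorem Nat.descFactorial_two (m : ℕ) : m.descFactorial 2 = m * m - m := by
  rw [Nat.descFactorial_succ, Nat.descFactorial_one, Nat.sub_one_mul]

theorem Nat.descFactorial_two_add_two_mul_le (s t : ℕ) :
    (s + 2 * t).descFactorial 2 ≤ s.descFactorial 2 + 4 * t * (s + 2 * t) := by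
  rw [Nat.descFactorial_two, Nat.descFactorial_two]
  zify [Nat.le_mul_self]
  nlinarith

namespace Multigraph

variable {n : ℕ} (G : Multigraph n)

def simpleNbrs (i : Fin n) : Finset (Fin n) := univ.filter (G.Simple i)

def doubleNbrs (i : Fin n) : Finset (Fin n) := univ.filter fun j => j ≠ i ∧ G.mult i j = 2

def simpleTwoStars : Finset (Fin n × Fin n × Fin n) :=
  univ.filter fun t => G.Simple t.1 t.2.1 ∧ G.Simple t.1 t.2.2 ∧ t.2.1 ≠ t.2.2

def doubleEdges : Finset (Fin n × Fin n) :=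
  univ.filter fun p => p.1 ≠ p.2 ∧ G.mult p.1 p.2 = 2

theorem card_simpleTwoStars :
    #G.simpleTwoStars = ∑ i, (#(G.simpleNbrs i)).descFactorial 2 := by
  rw [simpleTwoStars, card_filter, Fintype.sum_prod_type]
  refine sum_congr rfl fun i _ => ?_
  rw [Nat.descFactorial_two, ← offDiag_card, ← card_filter]
  congr 1
  ext ⟨j, k⟩
  simp [simpleNbrs]

theorem card_doubleEdges : #G.doubleEdges = ∑ i, #(G.doubleNbrs i) := by
  rw [doubleEdges, card_filter, Fintype.sum_prod_type]
  refine sum_congr rfl fun i _ => ?_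
  rw [doubleNbrs, card_filter]
  refine sum_congr rfl fun j _ => ?_
  simp only [ne_comm]

theorem deg_eq_card_simpleNbrs_add (hloop : ∀ i, G.mult i i = 0)
    (hmax : ∀ i j, i ≠ j → G.mult i j ≤ 2) (i : Fin n) :
    G.deg i = #(G.simpleNbrs i) + 2 * #(G.doubleNbrs i) := by
  have hsplit : ∀ j ∈ univ.filter (· ≠ i), G.mult i j
      = (if G.mult i j = 1 then 1 else 0) + 2 * (if G.mult i j = 2 then 1 else 0) := by
    intro j hj
    have := hmax i j (mem_filter.1 hj).2.symm
    interval_cases G.mult i j <;> rfl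
  rw [deg, hloop, sum_congr rfl hsplit, sum_add_distrib, ← mul_sum, sum_boole, sum_boole,
    filter_filter, filter_filter]
  simp only [Nat.cast_id, mul_zero, zero_add, simpleNbrs, doubleNbrs]
  congr 2
  ext j
  simp [Simple, ne_comm]

theorem sum_descFactorial_deg_le (hloop : ∀ i, G.mult i i = 0)
    (hmax : ∀ i j, i ≠ j → G.mult i j ≤ 2) (D : ℕ) (hD : ∀ i, G.deg i ≤ D) :
    ∑ i, (G.deg i).descFactorial 2 ≤ #G.simpleTwoStars + 4 * D * #G.doubleEdges := by
  rw [card_simpleTwoStars, card_doubleEdges, mul_sum, ← sum_add_distrib]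
  refine sum_le_sum fun i _ => ?_
  have hdeg := G.deg_eq_card_simpleNbrs_add hloop hmax i
  calc (G.deg i).descFactorial 2
      ≤ (#(G.simpleNbrs i)).descFactorial 2 + 4 * #(G.doubleNbrs i) * G.deg i := by
        rw [hdeg]; exact Nat.descFactorial_two_add_two_mul_le _ _
    _ ≤ (#(G.simpleNbrs i)).descFactorial 2 + 4 * D * #(G.doubleNbrs i) := by
        rw [mul_right_comm]; gcongr; exact hD i

end Multigraph

theorem le_dExt_zero {n : ℕ} {d : Fin n → ℕ} (hsorted : ∀ i j : Fin n, i ≤ j → d j ≤ d i)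
    (i : Fin n) : d i ≤ dExt n d 0 := by
  rw [dExt, dif_pos i.pos]
  exact hsorted _ _ (Nat.zero_le i.val)

theorem stmt3_general (n h md : ℕ) (G : Multigraph n) (d : Fin n → ℕ)
    (hdeg : ∀ i, G.deg i = d i)
    (hsorted : ∀ i j : Fin n, i ≤ j → d j ≤ d i)
    -- `md` light double-edges (counted as ordered pairs of endpoints)
    (hdouble : (Finset.univ.filter (fun p : Fin n × Fin n =>
        p.1 ≠ p.2 ∧ G.mult p.1 p.2 = 2 ∧ (h ≤ p.1.val ∨ h ≤ p.2.val))).card = 2 * md)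
    -- no other non-simple edges
    (hnoloop : ∀ i : Fin n, G.mult i i = 0)
    (hmax : ∀ i j : Fin n, i ≠ j → G.mult i j ≤ 2)
    (hmultilight : ∀ i j : Fin n, i ≠ j → 2 ≤ G.mult i j → (h ≤ i.val ∨ h ≤ j.val)) :
    ((∑ i : Fin n, Nat.descFactorial (d i) 2 : ℕ) : ℤ)
      - 8 * (md : ℤ) * (dExt n d 0 : ℤ)
    ≤ ((Finset.univ.filter (fun t : Fin n × Fin n × Fin n =>
        G.Simple t.1 t.2.1 ∧ G.Simple t.1 t.2.2 ∧ t.2.1 ≠ t.2.2)).card : ℤ) := by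
  have hlight : #G.doubleEdges = 2 * md := by
    rw [← hdouble, Multigraph.doubleEdges]
    congr 1
    ext ⟨i, j⟩
    simp only [mem_filter, mem_univ, true_and]
    exact ⟨fun ⟨hij, h2⟩ => ⟨hij, h2, hmultilight i j hij h2.ge⟩, fun ⟨hij, h2, _⟩ => ⟨hij, h2⟩⟩
  have hdegmax (i : Fin n) : G.deg i ≤ dExt n d 0 := hdeg i ▸ le_dExt_zero hsorted i
  have hbound := G.sum_descFactorial_deg_le hnoloop hmax _ hdegmax
  simp only [hdeg, hlight] at hbound
  change _ ≤ (#G.simpleTwoStars : ℤ)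
  push_cast at hbound ⊢
  linarith

/-- lower bound on the number of simple ordered two-stars when the only
non-simple edges are `md` light double-edges. -/
theorem stmt3 (n h md : ℕ) (G : Multigraph n) (d : Fin n → ℕ)
    (hdeg : ∀ i, G.deg i = d i)
    (hsorted : ∀ i j : Fin n, i ≤ j → d j ≤ d i)
    (hh1 : 1 ≤ h) (hhn : h ≤ n)
    -- `md` light double-edges (counted as ordered pairs of endpoints)
    (hdouble : (Finset.univ.filter (fun p : Fin n × Fin n =>
        p.1 ≠ p.2 ∧ G.mult p.1 p.2 = 2 ∧ (h ≤ p.1.val ∨ h ≤ p.2.val))).card = 2 * md)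
    -- no other non-simple edges
    (hnoloop : ∀ i : Fin n, G.mult i i = 0)
    (hmax : ∀ i j : Fin n, i ≠ j → G.mult i j ≤ 2)
    (hmultilight : ∀ i j : Fin n, i ≠ j → 2 ≤ G.mult i j → (h ≤ i.val ∨ h ≤ j.val)) :
    ((∑ i : Fin n, Nat.descFactorial (d i) 2 : ℕ) : ℤ)
      - 8 * (md : ℤ) * (dExt n d 0 : ℤ)
    ≤ ((Finset.univ.filter (fun t : Fin n × Fin n × Fin n =>
        G.Simple t.1 t.2.1 ∧ G.Simple t.1 t.2.2 ∧ t.2.1 ≠ t.2.2)).card : ℤ) :=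
  stmt3_general n h md G d hdeg hsorted hdouble hnoloop hmax hmultilight
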